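/- arXiv:1411.6886 — 3 statements merged into one kernel-verified Lean document; each statement's English description precedes it below -/
import Mathlib

section
/- Let X = ∏_{t∈T} X_t be a product of nonempty topological spaces. Then every nonempty S-open subset A of X is dense in X with respect to the Tychonoff topology τ. -/
open Function Filter Topology

/-- `Sigma1 x` (σ₁(x)): the set of points differing from `x` in at most one coordinate. -/
def Sigma1 {T : Type*} {X : T → Type*} (x : ∀ t, X t) : Set (∀ t, X t) :=
  {y | {t | y t ≠ x t}.Subsingleton}

/-- A set `A` is `S`-open if `σ₁(x) ⊆ A` for every `x ∈ A`. -/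
def SOpen {T : Type*} {X : T → Type*} (A : Set (∀ t, X t)) : Prop :=
  ∀ x ∈ A, Sigma1 x ⊆ A

/-!
An S-open set containing `x` contains all of `σ(x)`, since a point of `σ(x)` is reached from `x`
by changing one coordinate at a time. And `σ(x)` is dense: a basic open box restricts only
finitely many coordinates, so it contains a point agreeing with `x` everywhere else.
-/

section

variable {T : Type*} {X : T → Type*}

/-- `σ(x)`: the points differing from `x` in at most finitely many coordinates. -/
def SigmaFin (x : ∀ t, X t) : Set (∀ t, X t) :=
  {y | {t | y t ≠ x t}.Finite}

theorem update_mem_sigma1 [DecidableEq T] (x : ∀ t, X t) (t : T) (a : X t) :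
    update x t a ∈ Sigma1 x :=
  Set.subsingleton_of_subset_singleton fun i hi => by
    by_contra hit
    exact hi (update_of_ne hit a x)

theorem SOpen.update_mem [DecidableEq T] {A : Set (∀ t, X t)} (hA : SOpen A) {x : ∀ t, X t}
    (hx : x ∈ A) (t : T) (a : X t) : update x t a ∈ A :=
  hA x hx (update_mem_sigma1 x t a)

theorem SOpen.mem_of_eq_off_finset {A : Set (∀ t, X t)} (hA : SOpen A) {x : ∀ t, X t}
    (hx : x ∈ A) (s : Finset T) {y : ∀ t, X t} (hy : ∀ t ∉ s, y t = x t) : y ∈ A := by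
  classical
  induction s using Finset.induction_on generalizing y with
  | empty => rwa [funext fun t => hy t (Finset.notMem_empty t)]
  | @insert t s _ ih =>
    have hy' : update y t (x t) ∈ A := ih fun i hi => by
      by_cases hit : i = t
      · subst hit; exact update_self i (x i) y
      · rw [update_of_ne hit]; exact hy i (by simp [hit, hi])
    simpa only [update_idem, update_eq_self] using hA.update_mem hy' t (y t)

theorem SOpen.sigmaFin_subset {A : Set (∀ t, X t)} (hA : SOpen A) {x : ∀ t, X t}
    (hx : x ∈ A) : SigmaFin x ⊆ A := fun _ hy =>
  hA.mem_of_eq_off_finset hx hy.toFinset fun _ ht =>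
    not_not.mp fun hne => ht (hy.mem_toFinset.mpr hne)

theorem dense_sigmaFin [∀ t, TopologicalSpace (X t)] (x : ∀ t, X t) : Dense (SigmaFin x) := by
  classical
  refine dense_iff_inter_open.mpr fun U hU ⟨u, hu⟩ => ?_
  obtain ⟨I, V, hV, hIV⟩ := isOpen_pi_iff.mp hU u hu
  refine ⟨I.piecewise u x, hIV fun t ht => ?_, ?_⟩
  · rw [Finset.piecewise_eq_of_mem _ _ _ ht]
    exact (hV t ht).2
  · refine I.finite_toSet.subset fun t ht => ?_
    by_contra htI
    exact ht (Finset.piecewise_eq_of_notMem _ _ _ htI)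

end

theorem sOpen_dense_general {T : Type*} {X : T → Type*} [∀ t, TopologicalSpace (X t)]
    {A : Set (∀ t, X t)} (hA : SOpen A) (hne : A.Nonempty) :
    Dense A :=
  let ⟨_, hx⟩ := hne
  (dense_sigmaFin _).mono (hA.sigmaFin_subset hx)

/-- Every nonempty S-open subset of a product of nonempty topological spaces is dense
in the Tychonoff topology. -/
theorem sOpen_dense {T : Type*} {X : T → Type*} [∀ t, TopologicalSpace (X t)]
    [∀ t, Nonempty (X t)] {A : Set (∀ t, X t)} (hA : SOpen A) (hne : A.Nonempty) :
    Dense A :=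
  sOpen_dense_general hA hne
end

section
/- Let X = ∏_{t∈T} X_t be a product of topological spaces X_t with |X_t| > 1 for every t ∈ T, let T be infinite, and let (Y,d) be a metric space with |Y| > 1. Then there exists a strongly separately continuous mapping f : (X,τ) → Y that is discontinuous with respect to τ at every point of X. -/
/-!
Fix a base point `b`. Call `x` cofinitely equal to `b` if `x t = b t` for all but finitely many `t`,
and let `f` take one value on these points and another value elsewhere. Changing a single
coordinate does not change the cofinite class, so `f (update x t v) = f x` and `f` is strongly
separately continuous. On the other hand every basic open set of the
Tychonoff topology restricts only finitely many coordinates, so each cofinite class is dense;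
choosing `c` with `c t ≠ b t` for all `t`, the classes of `b` and `c` are disjoint because `T` is
infinite, so both fibres of `f` are dense and `f` is continuous nowhere.
-/

open Function Filter Topology

section CofiniteClass

variable {T : Type*} {X : T → Type*}

def cofiniteClass (b : ∀ t, X t) : Set (∀ t, X t) :=
  {x | ∀ᶠ t in cofinite, x t = b t}

theorem update_mem_cofiniteClass_iff [DecidableEq T] {b x : ∀ t, X t} {t : T} {v : X t} :
    update x t v ∈ cofiniteClass b ↔ x ∈ cofiniteClass b :=
  eventually_congr <| (eventually_cofinite_ne t).mono fun s hs => by rw [update_of_ne hs]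

theorem disjoint_cofiniteClass [Infinite T] {b c : ∀ t, X t} (hbc : ∀ t, b t ≠ c t) :
    Disjoint (cofiniteClass b) (cofiniteClass c) := by
  refine Set.disjoint_left.2 fun x (hb : ∀ᶠ t in cofinite, x t = b t) hc => ?_
  obtain ⟨t, hxb, hxc⟩ := (hb.and hc).exists
  exact hbc t (hxb.symm.trans hxc)

theorem dense_cofiniteClass [∀ t, TopologicalSpace (X t)] (b : ∀ t, X t) :
    Dense (cofiniteClass b) := by
  classical
  refine fun a => mem_closure_iff_nhds.2 fun U hU => ?_
  rw [nhds_pi, mem_pi'] at hU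
  obtain ⟨I, s, hs, hsU⟩ := hU
  refine ⟨I.piecewise a b, hsU fun t ht => ?_, ?_⟩
  · rw [I.piecewise_eq_of_mem _ _ (Finset.mem_coe.1 ht)]
    exact mem_of_mem_nhds (hs t)
  · exact I.eventually_cofinite_notMem.mono fun t ht => I.piecewise_eq_of_notMem _ _ ht

end CofiniteClass

theorem not_continuousAt_of_dense_fibers {α β : Type*} [TopologicalSpace α] [TopologicalSpace β]
    [T1Space β] {f : α → β} {y₀ y₁ : β} (hy : y₀ ≠ y₁) (h₀ : Dense (f ⁻¹' {y₀}))
    (h₁ : Dense (f ⁻¹' {y₁})) (a : α) : ¬ ContinuousAt f a := by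
  intro hf
  have eq_of_dense_fiber : ∀ y, Dense (f ⁻¹' {y}) → f a = y := fun y hd => by
    have hcl : closure (f '' (f ⁻¹' {y})) ⊆ {y} :=
      (closure_mono (Set.image_preimage_subset f {y})).trans_eq closure_singleton
    exact hcl (hf.continuousWithinAt.mem_closure_image (hd a))
  exact hy ((eq_of_dense_fiber y₀ h₀).symm.trans (eq_of_dense_fiber y₁ h₁))

/-- On an infinite product of nontrivial topological spaces there is a strongly
separately continuous map into any nontrivial metric space which is everywhere
discontinuous in the Tychonoff topology. -/
theorem exists_strSepCont_everywhere_discontinuous {T : Type*} [DecidableEq T]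
    [Infinite T] {X : T → Type*} [∀ t, TopologicalSpace (X t)]
    (hnt : ∀ t, Nontrivial (X t)) {Y : Type*} [MetricSpace Y] (hY : Nontrivial Y) :
    ∃ f : (∀ t, X t) → Y,
      (∀ (a : ∀ t, X t) (t : T),
        Filter.Tendsto (fun x => dist (f x) (f (Function.update x t (a t))))
          (nhds a) (nhds 0)) ∧
      (∀ a : ∀ t, X t, ¬ ContinuousAt f a) := by
  classical
  obtain ⟨y₀, y₁, hy⟩ := hY
  choose b c hbc using fun t => (hnt t).exists_pair_ne
  let f : (∀ t, X t) → Y := fun x => if x ∈ cofiniteClass b then y₀ else y₁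
  refine ⟨f, fun a t => ?_, not_continuousAt_of_dense_fibers hy ?_ ?_⟩
  · have hf : ∀ x, dist (f x) (f (update x t (a t))) = 0 := fun x => by
      simp only [f, update_mem_cofiniteClass_iff, dist_self]
    simpa only [hf] using tendsto_const_nhds
  · exact (dense_cofiniteClass b).mono fun x hx => if_pos hx
  · exact (dense_cofiniteClass c).mono fun x hx =>
      if_neg ((disjoint_cofiniteClass hbc).notMem_of_mem_right hx)
end

section
/- Let n ≥ 1 and let (X_i, ‖·‖_i), i = 1,…,n, be nontrivial normed spaces. Equip Y_n = X_1 × … × X_n with the metric d_n(x,y) = max_{1≤i≤n} ‖x_i − y_i‖_i. Let B_i' = {x ∈ X_i : ‖x‖_i < 1}, S_i = {x ∈ X_i : ‖x‖_i = 1}, and A_n = B_1' × … × B_{n−1}' × (X_n \ B_n'). Then for every u = (u_1,…,u_n) ∈ A_n one has d_n(u, Y_n \ A_n) = min_{1≤i≤n} dist(u_i, S_i), where dist(u_i, S_i) = inf_{s∈S_i} ‖u_i − s‖_i and d_n(u, B) = inf_{y∈B} d_n(u,y). -/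
open Function Filter Topology

lemma exists_on_sphere {E : Type*} [NormedAddCommGroup E] [NormedSpace ℝ E] [Nontrivial E]
    (x : E) : ∃ s : E, ‖s‖ = 1 ∧ ‖x - s‖ = |‖x‖ - 1| := by
  rcases eq_or_ne x 0 with rfl | hx
  · obtain ⟨s, hs⟩ := exists_norm_eq E zero_le_one
    exact ⟨s, hs, by simp [hs]⟩
  · have hnx : ‖x‖ ≠ 0 := norm_ne_zero_iff.mpr hx
    refine ⟨‖x‖⁻¹ • x, by rw [norm_smul, norm_inv, norm_norm, inv_mul_cancel₀ hnx], ?_⟩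
    have h : x - ‖x‖⁻¹ • x = (1 - ‖x‖⁻¹) • x := by rw [sub_smul, one_smul]
    rw [h, norm_smul, Real.norm_eq_abs]
    calc |1 - ‖x‖⁻¹| * ‖x‖ = |(1 - ‖x‖⁻¹) * ‖x‖| := by
          rw [abs_mul, abs_of_nonneg (norm_nonneg x)]
      _ = |‖x‖ - 1| := by rw [sub_mul, one_mul, inv_mul_cancel₀ hnx, abs_sub_comm]

lemma infDist_sphere_eq {E : Type*} [NormedAddCommGroup E] [NormedSpace ℝ E] [Nontrivial E]
    (x : E) : Metric.infDist x (Metric.sphere (0 : E) 1) = |‖x‖ - 1| := by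
  obtain ⟨s, hs, hxs⟩ := exists_on_sphere x
  apply le_antisymm
  · have hmem : s ∈ Metric.sphere (0 : E) 1 := by simp [hs]
    exact (Metric.infDist_le_dist_of_mem hmem).trans_eq (by rw [dist_eq_norm, hxs])
  · refine le_of_not_gt fun h => ?_
    obtain ⟨y, hy, hlt⟩ := (Metric.infDist_lt_iff ⟨s, by simp [hs]⟩).mp h
    have hy1 : ‖y‖ = 1 := by simpa using hy
    have : |‖x‖ - 1| ≤ dist x y := by
      rw [dist_eq_norm, ← hy1]; exact abs_norm_sub_norm_le x y
    exact hlt.not_ge this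

/-- For `u ∈ Aₙ = B₁' × ⋯ × Bₙ₋₁' × (Xₙ \\ Bₙ')`, the distance from `u` to the
complement of `Aₙ` (in the max-metric on the product) equals the minimum of the
distances of the coordinates of `u` to the unit spheres. -/
theorem infDist_compl_eq_min_infDist_sphere {n : ℕ} (X : Fin (n + 1) → Type*)
    [∀ i, NormedAddCommGroup (X i)] [∀ i, NormedSpace ℝ (X i)] [∀ i, Nontrivial (X i)]
    (A : Set (∀ i, X i))
    (hA : A = {y | (∀ i : Fin (n + 1), i ≠ Fin.last n → ‖y i‖ < 1) ∧ 1 ≤ ‖y (Fin.last n)‖})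
    (u : ∀ i, X i) (hu : u ∈ A) :
    Metric.infDist u Aᶜ = ⨅ i, Metric.infDist (u i) (Metric.sphere (0 : X i) 1) := by
  subst hA
  obtain ⟨hu1, hu2⟩ := hu
  have hne : (({y : ∀ i, X i | (∀ i : Fin (n + 1), i ≠ Fin.last n → ‖y i‖ < 1) ∧
      1 ≤ ‖y (Fin.last n)‖} : Set (∀ i, X i))ᶜ).Nonempty := by
    refine ⟨0, fun h => ?_⟩
    have := h.2
    rw [Pi.zero_apply, norm_zero] at this
    linarith
  have hD : ∀ i, Metric.infDist (u i) (Metric.sphere (0 : X i) 1) = |‖u i‖ - 1| :=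
    fun i => infDist_sphere_eq (u i)
  apply le_antisymm
  · apply le_ciInf
    intro i
    rw [hD i]
    by_cases hi : i = Fin.last n
    · subst hi
      refine le_of_forall_pos_le_add fun ε hε => ?_
      have hv : u (Fin.last n) ≠ 0 := by
        intro h
        rw [h, norm_zero] at hu2
        linarith
      set v := u (Fin.last n) with hvdef
      have hnv : ‖v‖ ≠ 0 := norm_ne_zero_iff.mpr hv
      set t : ℝ := max 0 (1 - ε) with ht
      have ht0 : 0 ≤ t := le_max_left _ _
      have ht1 : t < 1 := max_lt one_pos (by linarith)
      set y : ∀ i, X i := Function.update u (Fin.last n) (t • (‖v‖⁻¹ • v)) with hy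
      have hyl : y (Fin.last n) = t • (‖v‖⁻¹ • v) := by rw [hy, Function.update_self]
      have hynorm : ‖y (Fin.last n)‖ = t := by
        rw [hyl, norm_smul, norm_smul, norm_inv, norm_norm, Real.norm_eq_abs,
          abs_of_nonneg ht0, inv_mul_cancel₀ hnv, mul_one]
      have hymem : y ∈ ({y : ∀ i, X i | (∀ i : Fin (n + 1), i ≠ Fin.last n → ‖y i‖ < 1) ∧
          1 ≤ ‖y (Fin.last n)‖} : Set (∀ i, X i))ᶜ := fun h =>
        absurd (h.2.trans_eq hynorm) ht1.not_ge
      refine (Metric.infDist_le_dist_of_mem hymem).trans ?_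
      have hv1 : 1 ≤ ‖v‖ := hu2
      have hd : dist u y ≤ ‖v‖ - t := by
        rw [dist_pi_le_iff (by linarith)]
        intro j
        by_cases hj : j = Fin.last n
        · subst hj
          rw [dist_eq_norm, hyl, ← hvdef]
          have heq : v - t • ‖v‖⁻¹ • v = (1 - t * ‖v‖⁻¹) • v := by
            rw [sub_smul, one_smul, smul_smul]
          have hinv : ‖v‖⁻¹ ≤ 1 := inv_le_one_of_one_le₀ hv1
          have h1 : t * ‖v‖⁻¹ ≤ 1 := by
            calc t * ‖v‖⁻¹ ≤ 1 * 1 := mul_le_mul ht1.le hinv (by positivity) one_pos.le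
              _ = 1 := one_mul 1
          rw [heq, norm_smul, Real.norm_eq_abs, abs_of_nonneg (by linarith),
            sub_mul, one_mul, mul_assoc, inv_mul_cancel₀ hnv, mul_one]
        · rw [hy, Function.update_of_ne hj]
          simp only [dist_self]
          linarith
      refine hd.trans ?_
      rw [abs_of_nonneg (by linarith)]
      have : 1 - ε ≤ t := le_max_right _ _
      linarith
    · have hui : ‖u i‖ < 1 := hu1 i hi
      obtain ⟨s, hs, hds⟩ := exists_on_sphere (u i)
      set y : ∀ j, X j := Function.update u i s with hy
      have hymem : y ∈ ({y : ∀ i, X i | (∀ i : Fin (n + 1), i ≠ Fin.last n → ‖y i‖ < 1) ∧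
          1 ≤ ‖y (Fin.last n)‖} : Set (∀ i, X i))ᶜ := by
        intro h
        have := h.1 i hi
        rw [hy, Function.update_self, hs] at this
        exact lt_irrefl 1 this
      refine (Metric.infDist_le_dist_of_mem hymem).trans ?_
      rw [dist_pi_le_iff (abs_nonneg _)]
      intro j
      by_cases hj : j = i
      · subst hj
        rw [hy, dist_eq_norm, Function.update_self, hds]
      · rw [hy, Function.update_of_ne hj]
        simp only [dist_self]
        exact abs_nonneg _
  · refine le_of_not_gt fun h => ?_
    obtain ⟨y, hy, hlt⟩ := (Metric.infDist_lt_iff hne).mp h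
    rw [Set.mem_compl_iff, Set.mem_setOf_eq, not_and_or] at hy
    have key : ∃ i, |‖u i‖ - 1| ≤ dist (u i) (y i) := by
      rcases hy with hy | hy
      · push_neg at hy
        obtain ⟨i, hi, h1⟩ := hy
        refine ⟨i, ?_⟩
        have hui : ‖u i‖ < 1 := hu1 i hi
        rw [abs_of_nonpos (by linarith), neg_sub, dist_eq_norm]
        calc 1 - ‖u i‖ ≤ ‖y i‖ - ‖u i‖ := by linarith
          _ ≤ ‖u i - y i‖ := by
              have := norm_sub_norm_le (y i) (u i)
              rw [← norm_neg (y i - u i), neg_sub] at this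
              linarith
      · push_neg at hy
        refine ⟨Fin.last n, ?_⟩
        rw [abs_of_nonneg (by linarith), dist_eq_norm]
        calc ‖u (Fin.last n)‖ - 1 ≤ ‖u (Fin.last n)‖ - ‖y (Fin.last n)‖ := by linarith
          _ ≤ ‖u (Fin.last n) - y (Fin.last n)‖ := norm_sub_norm_le _ _
    obtain ⟨i, hi⟩ := key
    have h1 : ⨅ j, Metric.infDist (u j) (Metric.sphere (0 : X j) 1) ≤ |‖u i‖ - 1| := by
      rw [← hD i]
      exact ciInf_le (Finite.bddBelow_range _) i
    have h2 : dist (u i) (y i) ≤ dist u y := dist_le_pi_dist u y i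
    linarith
end
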